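/- arXiv:2203.03761 — 2 statements merged into one kernel-verified Lean document; each statement's English description precedes it below -/
import Mathlib

section
/- There exist universal constants C₀ > 0 and c₁ > 0 with the following property. Let d and b be positive integers with b ≤ c₁·d, and let c > 0. For every b-bit randomized compression scheme (C, v̂) for the ball B_d(c) that is unbiased, meaning Σ_{m ∈ M} C(v)({m}) · ∫ u dv̂(m)(u) = v for all v ∈ B_d(c), the worst-case mean squared error satisfies sup over v ∈ B_d(c) of MSE(v) ≥ C₀·c²·d/b. -/
open MeasureTheory Finset

/-- A `b`-bit randomized compression scheme for the Euclidean ball of radius `c`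
in `ℝ^d`: a Markov-kernel encoder `enc` into the message set `Fin (2^b)` and a
Markov-kernel decoder `dec` producing probability distributions on `ℝ^d` with
finite second moment; encoder and decoder randomness are independent. -/
structure CompressionScheme (d b : ℕ) (c : ℝ) where
  enc : (Fin d → ℝ) → Fin (2 ^ b) → ℝ
  dec : Fin (2 ^ b) → Measure (Fin d → ℝ)
  enc_nonneg : ∀ v k, 0 ≤ enc v k
  enc_sum_one : ∀ v : Fin d → ℝ, Real.sqrt (∑ j, (v j) ^ 2) ≤ c → ∑ k, enc v k = 1
  dec_prob : ∀ k, IsProbabilityMeasure (dec k)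
  dec_sq_integrable : ∀ k, Integrable (fun u : Fin d → ℝ => ∑ j, (u j) ^ 2) (dec k)

/-- Mean squared error of a compression scheme at input `v`. -/
noncomputable def MSE {d b : ℕ} {c : ℝ} (A : CompressionScheme d b c)
    (v : Fin d → ℝ) : ℝ :=
  ∑ k, A.enc v k * ∫ u, (∑ j, (u j - v j) ^ 2) ∂(A.dec k)

/-!
Take `s² = 2 (b + 1) log 2`. By the Chernoff bound for Rademacher sums, each of the `2^b` decoder
means `m_k` satisfies `⟪σ, m_k⟫ > s ‖m_k‖` for fewer than a `2^{-(b+1)}` fraction of the sign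
vectors `σ ∈ {±1}^d`, so some `σ` has `⟪σ, m_k⟫ ≤ s ‖m_k‖` for all `k`. For the input
`v = c σ / √d`, unbiasedness gives `c² = ∑ p_k ⟪v, m_k⟫ ≤ (c s / √d) ∑ p_k ‖m_k‖`, hence
`∑ p_k ‖m_k‖² ≥ c² d / s²` by Jensen, and the bias–variance decomposition yields
`MSE(v) ≥ ∑ p_k ‖m_k - v‖² = ∑ p_k ‖m_k‖² - c² ≥ c² d / s² - c²`, of order `c² d / b` once `d ≫ b`.
-/

open Real

def boolSign (b : Bool) : ℝ := if b then 1 else -1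

@[simp]
lemma boolSign_sq (b : Bool) : boolSign b ^ 2 = 1 := by
  cases b <;> simp [boolSign]

section SignVectors

variable {ι : Type*} [Fintype ι] [DecidableEq ι]

lemma sum_exp_mul_sum_boolSign_le (w : ι → ℝ) (t : ℝ) :
    ∑ σ : ι → Bool, exp (t * ∑ i, boolSign (σ i) * w i) ≤
      2 ^ Fintype.card ι * exp (t ^ 2 * (∑ i, w i ^ 2) / 2) := by
  calc ∑ σ : ι → Bool, exp (t * ∑ i, boolSign (σ i) * w i)
      = ∏ i, ∑ b : Bool, exp (t * (boolSign b * w i)) := by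
        simp only [Fintype.prod_sum, mul_sum, exp_sum]
    _ = ∏ i, 2 * cosh (t * w i) := by
        congr! 1 with i
        simp only [Fintype.sum_bool, boolSign, cosh_eq, ↓reduceIte, Bool.false_eq_true, one_mul,
          neg_mul, mul_neg]
        ring
    _ ≤ ∏ i, 2 * exp ((t * w i) ^ 2 / 2) := by
        gcongr with i
        exact cosh_le_exp_half_sq _
    _ = 2 ^ Fintype.card ι * exp (t ^ 2 * (∑ i, w i ^ 2) / 2) := by
        rw [prod_mul_distrib, prod_const, card_univ, ← exp_sum, mul_sum, sum_div]
        simp only [mul_pow]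

lemma card_lt_sum_boolSign_mul_exp_le (w : ι → ℝ) {s : ℝ} (hs : 0 ≤ s) :
    (#{σ : ι → Bool | s * √(∑ i, w i ^ 2) < ∑ i, boolSign (σ i) * w i} : ℝ) * exp (s ^ 2 / 2)
      ≤ 2 ^ Fintype.card ι := by
  rcases (sqrt_nonneg _ : 0 ≤ √(∑ i, w i ^ 2)).eq_or_lt with hW | hW
  · have hw : w = 0 := by
      have hsum : ∑ i, w i ^ 2 = 0 := (sqrt_eq_zero (by positivity)).1 hW.symm
      funext i
      simpa using congrFun ((Fintype.sum_eq_zero_iff_of_nonneg fun i => sq_nonneg (w i)).1 hsum) i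
    simp [hw]
  -- Chernoff: exponential Markov inequality at the optimal parameter `t = s / ‖w‖`.
  set t := s / √(∑ i, w i ^ 2)
  have hmarkov : (#{σ : ι → Bool | s * √(∑ i, w i ^ 2) < ∑ i, boolSign (σ i) * w i} : ℝ) *
      exp (s ^ 2) ≤ ∑ σ : ι → Bool, exp (t * ∑ i, boolSign (σ i) * w i) := by
    rw [← nsmul_eq_mul]
    refine (card_nsmul_le_sum _ _ _ fun σ hσ => exp_le_exp.2 ?_).trans
      (sum_le_sum_of_subset_of_nonneg (subset_univ _) fun _ _ _ => (exp_pos _).le)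
    calc s ^ 2 = t * (s * √(∑ i, w i ^ 2)) := by simp only [t]; field_simp
      _ ≤ t * ∑ i, boolSign (σ i) * w i := by gcongr; exact (mem_filter.1 hσ).2.le
  have hmgf := sum_exp_mul_sum_boolSign_le w t
  rw [show t ^ 2 * (∑ i, w i ^ 2) / 2 = s ^ 2 / 2 by
    rw [← sq_sqrt (by positivity : 0 ≤ ∑ i, w i ^ 2)]; simp only [t]; field_simp] at hmgf
  refine le_of_mul_le_mul_right ?_ (exp_pos (s ^ 2 / 2))
  rw [mul_assoc, ← exp_add, add_halves]
  exact hmarkov.trans hmgf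

lemma exists_boolSign_sum_le {κ : Type*} [Fintype κ] (w : κ → ι → ℝ) {s : ℝ} (hs : 0 ≤ s)
    (hκ : (Fintype.card κ : ℝ) < exp (s ^ 2 / 2)) :
    ∃ σ : ι → Bool, ∀ k, ∑ i, boolSign (σ i) * w k i ≤ s * √(∑ i, w k i ^ 2) := by
  by_contra! h
  set Bad : κ → Finset (ι → Bool) :=
    fun k => {σ | s * √(∑ i, w k i ^ 2) < ∑ i, boolSign (σ i) * w k i}
  have hcover : (2 : ℝ) ^ Fintype.card ι ≤ ∑ k, (#(Bad k) : ℝ) := by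
    have hsub : (univ : Finset (ι → Bool)) ⊆ univ.biUnion Bad := fun σ _ => by
      obtain ⟨k, hk⟩ := h σ
      exact mem_biUnion.2 ⟨k, mem_univ _, mem_filter.2 ⟨mem_univ _, hk⟩⟩
    have := (card_le_card hsub).trans card_biUnion_le
    simp only [card_univ, Fintype.card_fun, Fintype.card_bool] at this
    exact_mod_cast this
  have hbound : (2 : ℝ) ^ Fintype.card ι * exp (s ^ 2 / 2) ≤ Fintype.card κ * 2 ^ Fintype.card ι :=
    calc (2 : ℝ) ^ Fintype.card ι * exp (s ^ 2 / 2)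
        ≤ ∑ k, (#(Bad k) : ℝ) * exp (s ^ 2 / 2) := by
          rw [← sum_mul]; gcongr
      _ ≤ ∑ _k : κ, (2 : ℝ) ^ Fintype.card ι :=
          sum_le_sum fun k _ => card_lt_sum_boolSign_mul_exp_le (w k) hs
      _ = Fintype.card κ * 2 ^ Fintype.card ι := by simp
  have h2 : (0 : ℝ) < 2 ^ Fintype.card ι := by positivity
  nlinarith

end SignVectors

section SecondMoment

variable {ι : Type*} [Fintype ι] {ν : Measure (ι → ℝ)}

lemma memLp_two_eval_of_integrable_sum_sq
    (hν : Integrable (fun u : ι → ℝ => ∑ j, u j ^ 2) ν) (i : ι) :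
    MemLp (fun u : ι → ℝ => u i) 2 ν := by
  refine (memLp_two_iff_integrable_sq (measurable_pi_apply i).aestronglyMeasurable).2 <|
    hν.mono' ((measurable_pi_apply i).pow_const 2).aestronglyMeasurable <| ae_of_all _ fun u => ?_
  rw [Real.norm_of_nonneg (sq_nonneg _)]
  exact single_le_sum (fun j _ => sq_nonneg (u j)) (mem_univ i)

lemma sum_sq_integral_sub_le [IsProbabilityMeasure ν]
    (hν : Integrable (fun u : ι → ℝ => ∑ j, u j ^ 2) ν) (v : ι → ℝ) :
    ∑ j, ((∫ u, u ∂ν) j - v j) ^ 2 ≤ ∫ u, ∑ j, (u j - v j) ^ 2 ∂ν := by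
  have hmem (j : ι) : MemLp (fun u : ι → ℝ => u j - v j) 2 ν :=
    (memLp_two_eval_of_integrable_sum_sq hν j).sub (memLp_const _)
  rw [integral_finsetSum _ fun j _ => (hmem j).integrable_sq]
  refine sum_le_sum fun j _ => ?_
  have hmean : (∫ u, u ∂ν) j - v j = ∫ u, (u j - v j) ∂ν := by
    rw [eval_integral fun i => (memLp_two_eval_of_integrable_sum_sq hν i).integrable one_le_two,
      integral_sub ((memLp_two_eval_of_integrable_sum_sq hν j).integrable one_le_two)
        (integrable_const _), integral_const, probReal_univ, one_smul]
  have hvar := ProbabilityTheory.variance_eq_sub (hmem j)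
  simp only [Pi.pow_apply] at hvar
  rw [hmean]
  linarith [ProbabilityTheory.variance_nonneg (fun u : ι → ℝ => u j - v j) ν]

end SecondMoment

section Mixture

variable {E κ : Type*} [NormedAddCommGroup E] [InnerProductSpace ℝ E] [Fintype κ]
  {p : κ → ℝ} {μ : κ → E} {v : E}

lemma sum_mul_norm_sub_sq_eq (hp : ∑ k, p k = 1) (hv : ∑ k, p k • μ k = v) :
    ∑ k, p k * ‖μ k - v‖ ^ 2 = ∑ k, p k * ‖μ k‖ ^ 2 - ‖v‖ ^ 2 := by
  have hmean : ∑ k, p k * inner ℝ (μ k) v = ‖v‖ ^ 2 := by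
    simp_rw [← real_inner_self_eq_norm_sq, ← real_inner_smul_left, ← sum_inner, hv]
  simp only [norm_sub_sq_real, mul_add, mul_sub, sum_add_distrib, sum_sub_distrib, ← sum_mul, hp,
    mul_left_comm (p _) 2, ← mul_sum, hmean]
  ring

lemma norm_pow_four_le_of_inner_le (hp0 : ∀ k, 0 ≤ p k) (hp : ∑ k, p k = 1)
    (hv : ∑ k, p k • μ k = v) {a : ℝ} (hμ : ∀ k, inner ℝ v (μ k) ≤ a * ‖μ k‖) :
    ‖v‖ ^ 4 ≤ a ^ 2 * ∑ k, p k * ‖μ k‖ ^ 2 := by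
  have hlin : ‖v‖ ^ 2 ≤ a * ∑ k, p k * ‖μ k‖ :=
    calc ‖v‖ ^ 2 = ∑ k, p k * inner ℝ v (μ k) := by
          simp_rw [← real_inner_self_eq_norm_sq, ← real_inner_smul_right, ← inner_sum]
          nth_rw 2 [← hv]
      _ ≤ ∑ k, p k * (a * ‖μ k‖) := by gcongr with k; exacts [hp0 k, hμ k]
      _ = a * ∑ k, p k * ‖μ k‖ := by rw [mul_sum]; exact sum_congr rfl fun k _ => by ring
  have hjensen : (∑ k, p k * ‖μ k‖) ^ 2 ≤ ∑ k, p k * ‖μ k‖ ^ 2 := by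
    simpa using (convexOn_pow 2).map_sum_le (t := univ) (fun k _ => hp0 k) hp
      (fun k _ => Set.mem_Ici.2 (norm_nonneg (μ k)))
  calc ‖v‖ ^ 4 = (‖v‖ ^ 2) ^ 2 := by ring
    _ ≤ (a * ∑ k, p k * ‖μ k‖) ^ 2 := by gcongr
    _ = a ^ 2 * (∑ k, p k * ‖μ k‖) ^ 2 := mul_pow _ _ _
    _ ≤ a ^ 2 * ∑ k, p k * ‖μ k‖ ^ 2 := by gcongr

end Mixture

lemma EuclideanSpace.norm_toLp_sq {ι : Type*} [Fintype ι] (x : ι → ℝ) :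
    ‖WithLp.toLp 2 x‖ ^ 2 = ∑ i, x i ^ 2 := by
  simp [EuclideanSpace.real_norm_sq_eq]

namespace CompressionScheme

variable {d b : ℕ} {c : ℝ} (A : CompressionScheme d b c)

noncomputable def decMean (k : Fin (2 ^ b)) : Fin d → ℝ := ∫ u, u ∂(A.dec k)

lemma sum_enc_mul_sum_sq_decMean_sub_le_mse (v : Fin d → ℝ) :
    ∑ k, A.enc v k * ∑ j, (A.decMean k j - v j) ^ 2 ≤ MSE A v :=
  sum_le_sum fun k _ => mul_le_mul_of_nonneg_left
    (have := A.dec_prob k; sum_sq_integral_sub_le (A.dec_sq_integrable k) v) (A.enc_nonneg v k)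

variable {A} {v : Fin d → ℝ}

lemma sum_enc_smul_toLp_decMean (hunb : ∑ k, A.enc v k • A.decMean k = v) :
    ∑ k, A.enc v k • WithLp.toLp 2 (A.decMean k) = WithLp.toLp 2 v := by
  simp_rw [← WithLp.toLp_smul, ← WithLp.toLp_sum, hunb]

lemma sum_enc_mul_sum_sq_decMean_sub_sum_sq_le_mse (hball : √(∑ j, v j ^ 2) ≤ c)
    (hunb : ∑ k, A.enc v k • A.decMean k = v) :
    ∑ k, A.enc v k * ∑ j, A.decMean k j ^ 2 - ∑ j, v j ^ 2 ≤ MSE A v := by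
  have h := sum_mul_norm_sub_sq_eq (A.enc_sum_one v hball) (sum_enc_smul_toLp_decMean hunb)
  simp only [← WithLp.toLp_sub, EuclideanSpace.norm_toLp_sq, Pi.sub_apply] at h
  exact h ▸ A.sum_enc_mul_sum_sq_decMean_sub_le_mse v

lemma sq_sum_sq_le_mul_sum_enc_mul_sum_sq_decMean (hball : √(∑ j, v j ^ 2) ≤ c)
    (hunb : ∑ k, A.enc v k • A.decMean k = v) {a : ℝ}
    (hmean : ∀ k, ∑ j, v j * A.decMean k j ≤ a * √(∑ j, A.decMean k j ^ 2)) :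
    (∑ j, v j ^ 2) ^ 2 ≤ a ^ 2 * ∑ k, A.enc v k * ∑ j, A.decMean k j ^ 2 := by
  have h := norm_pow_four_le_of_inner_le (A.enc_nonneg v) (A.enc_sum_one v hball)
    (sum_enc_smul_toLp_decMean hunb) (a := a) fun k => by
      rw [EuclideanSpace.norm_eq]
      simpa [PiLp.inner_apply, mul_comm] using hmean k
  simpa only [show ∀ x : EuclideanSpace ℝ (Fin d), ‖x‖ ^ 4 = (‖x‖ ^ 2) ^ 2 from fun x => by ring,
    EuclideanSpace.norm_toLp_sq] using h

variable (A)

lemma exists_boolSign_sum_mul_decMean_le :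
    ∃ σ : Fin d → Bool, ∀ k, ∑ i, boolSign (σ i) * A.decMean k i ≤
      √(2 * (b + 1) * log 2) * √(∑ i, A.decMean k i ^ 2) := by
  refine exists_boolSign_sum_le A.decMean (sqrt_nonneg _) ?_
  rw [sq_sqrt (by positivity), Fintype.card_fin, show 2 * ((b : ℝ) + 1) * log 2 / 2 =
    (b + 1 : ℕ) * log 2 by push_cast; ring, exp_nat_mul, exp_log two_pos]
  push_cast
  exact pow_lt_pow_right₀ one_lt_two (Nat.lt_succ_self b)

theorem exists_le_mse (hd : 0 < d) (hc : 0 < c)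
    (hunb : ∀ v : Fin d → ℝ, √(∑ j, v j ^ 2) ≤ c → ∑ k, A.enc v k • A.decMean k = v) :
    ∃ v : Fin d → ℝ, √(∑ j, v j ^ 2) ≤ c ∧
      c ^ 2 * d / (2 * (b + 1) * log 2) - c ^ 2 ≤ MSE A v := by
  set s := √(2 * (b + 1) * log 2)
  have hs2 : s ^ 2 = 2 * (b + 1) * log 2 := sq_sqrt (by positivity)
  obtain ⟨σ, hσ⟩ := A.exists_boolSign_sum_mul_decMean_le
  set v : Fin d → ℝ := fun j => c / √d * boolSign (σ j)
  have hv : ∑ j, v j ^ 2 = c ^ 2 := by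
    have hd' : (0 : ℝ) < d := by positivity
    simp only [v, mul_pow, div_pow, sq_sqrt hd'.le, boolSign_sq, mul_one, sum_const, card_univ,
      Fintype.card_fin, nsmul_eq_mul]
    field_simp
  have hball : √(∑ j, v j ^ 2) ≤ c := by rw [hv, sqrt_sq hc.le]
  have hmean (k) : ∑ j, v j * A.decMean k j ≤ c / √d * s * √(∑ j, A.decMean k j ^ 2) := by
    simp only [v, mul_assoc, ← mul_sum]
    exact mul_le_mul_of_nonneg_left (hσ k) (by positivity)
  have hmoment := sq_sum_sq_le_mul_sum_enc_mul_sum_sq_decMean hball (hunb v hball) hmean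
  have hmse := sum_enc_mul_sum_sq_decMean_sub_sum_sq_le_mse hball (hunb v hball)
  refine ⟨v, hball, ?_⟩
  rw [hv] at hmoment hmse
  rw [← hs2]
  set S := ∑ k, A.enc v k * ∑ j, A.decMean k j ^ 2
  have hS : c ^ 2 * d / s ^ 2 ≤ S := by
    rw [mul_pow, div_pow, sq_sqrt (by positivity)] at hmoment
    field_simp at hmoment
    rwa [div_le_iff₀ (by positivity), mul_comm S]
  linarith

end CompressionScheme

/-- there exist universal constants `C₀ > 0` and `c₁ > 0` such that
for every unbiased `b`-bit compression scheme for `B_d(c)` with `b ≤ c₁·d`, the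
worst-case MSE is at least `C₀·c²·d/b` (stated as: any uniform upper bound `Cbd`
on the MSE over the ball satisfies `Cbd ≥ C₀·c²·d/b`). -/
theorem unbiased_compression_mse_lower_bound :
    ∃ C₀ : ℝ, 0 < C₀ ∧ ∃ c₁ : ℝ, 0 < c₁ ∧
      ∀ (d b : ℕ) (c : ℝ) (A : CompressionScheme d b c),
      0 < d → 0 < b → 0 < c → (b : ℝ) ≤ c₁ * d →
      -- unbiasedness: the mixture of decoder means equals the input
      (∀ v : Fin d → ℝ, Real.sqrt (∑ j, (v j) ^ 2) ≤ c →
        ∑ k, A.enc v k • (∫ u, u ∂(A.dec k)) = v) →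
      ∀ Cbd : ℝ,
        (∀ v : Fin d → ℝ, Real.sqrt (∑ j, (v j) ^ 2) ≤ c → MSE A v ≤ Cbd) →
        C₀ * c ^ 2 * d / b ≤ Cbd := by
  have hlog : 0 < log 2 := log_pos one_lt_two
  refine ⟨(8 * log 2)⁻¹, by positivity, (8 * log 2)⁻¹, by positivity, ?_⟩
  intro d b c A hd hb hc hbd hunb Cbd hCbd
  obtain ⟨v, hball, hmse⟩ := A.exists_le_mse hd hc hunb
  have hb1 : (1 : ℝ) ≤ b := by exact_mod_cast hb
  have hdb : 8 * log 2 * b ≤ d := by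
    rwa [le_inv_mul_iff₀ (by positivity)] at hbd
  calc (8 * log 2)⁻¹ * c ^ 2 * d / b
      = c ^ 2 * d / (4 * b * log 2) - c ^ 2 * d / (8 * b * log 2) := by
        field_simp; ring
    _ ≤ c ^ 2 * d / (2 * (b + 1) * log 2) - c ^ 2 := by
        gcongr ?_ - ?_
        · exact div_le_div_of_nonneg_left (by positivity) (by positivity) (by nlinarith)
        · rw [le_div_iff₀ (by positivity)]
          nlinarith [sq_nonneg c]
    _ ≤ MSE A v := hmse
    _ ≤ Cbd := hCbd v hball
end

section
/- Consider the secure-aggregation distributed mean estimation model with n clients, dimension d, radius c > 0, and finite abelian group G. If the scheme satisfies E[‖μ̂(Z₁ + ⋯ + Z_n) − μ‖₂²] ≤ ξ for all inputs x₁, …, x_n ∈ B_d(c), where 0 < ξ ≤ c², then the group size must satisfy log₂|G| ≥ (d/2)·log₂(c²/ξ). -/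
/-!
Feeding every client the same vector `v` of the ball, the server's output is a mixture, over the
sum `s ∈ G`, of the decoder laws `dec s`; hence some `s` already has mean squared error at most
`ξ` at `v`, and by the bias–variance inequality the mean of `dec s` lies within `√ξ` of `v`.
So the `|G|` decoder means form a `√ξ`-net of the ball of radius `c` in `ℝ^d`, and comparing
volumes gives `c^d ≤ |G| · ξ^(d/2)`.
-/

open MeasureTheory Finset

/-- Mean squared error of a secure-aggregation distributed mean estimation scheme:
each client `i` encodes its vector `x i` into a group element via the Markov kernel
`enc i`, independently across clients; the server sees only the sum of the group
elements and applies the (randomized, independent) decoder `dec` to estimate the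
mean `(1/n)·Σᵢ xᵢ`. -/
noncomputable def dmeMSE {n d : ℕ} {G : Type*} [AddCommGroup G] [Fintype G]
    (enc : Fin n → (Fin d → ℝ) → G → ℝ) (dec : G → Measure (Fin d → ℝ))
    (x : Fin n → Fin d → ℝ) : ℝ :=
  ∑ z : Fin n → G,
    (∏ i, enc i (x i) (z i)) *
      ∫ u, (∑ j, (u j - (n : ℝ)⁻¹ * ∑ i, x i j) ^ 2) ∂(dec (∑ i, z i))

open ProbabilityTheory Metric Module

lemma sq_sub_integral_le_integral_sq_sub {Ω : Type*} [MeasurableSpace Ω] {μ : Measure Ω}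
    [IsProbabilityMeasure μ] {X : Ω → ℝ} (hX : MemLp X 2 μ) (a : ℝ) :
    (a - ∫ ω, X ω ∂μ) ^ 2 ≤ ∫ ω, (X ω - a) ^ 2 ∂μ := by
  have hmean : ∫ ω, (X ω - a) ∂μ = ∫ ω, X ω ∂μ - a := by
    simp [integral_sub (hX.integrable one_le_two) (integrable_const a)]
  have hvar := variance_eq_sub (hX.sub (memLp_const a))
  simp only [Pi.pow_apply, Pi.sub_apply, hmean] at hvar
  rw [sub_sq_comm]
  linarith [variance_nonneg (X - fun _ => a) μ]

lemma memLp_two_eval_of_integrable_sum_sq_s9 {ι : Type*} [Fintype ι] {μ : Measure (ι → ℝ)}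
    (h : Integrable (fun u : ι → ℝ => ∑ j, u j ^ 2) μ) (j : ι) :
    MemLp (fun u : ι → ℝ => u j) 2 μ := by
  refine (memLp_two_iff_integrable_sq (measurable_pi_apply j).aestronglyMeasurable).2 <|
    h.mono ((measurable_pi_apply j).pow_const 2).aestronglyMeasurable <| .of_forall fun u => ?_
  rw [Real.norm_of_nonneg (sq_nonneg _), Real.norm_of_nonneg (sum_nonneg fun k _ => sq_nonneg _)]
  exact single_le_sum (fun k _ => sq_nonneg (u k)) (mem_univ j)

lemma sum_sq_sub_integral_le_integral_sum_sq_sub {ι : Type*} [Fintype ι]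
    {μ : Measure (ι → ℝ)} [IsProbabilityMeasure μ]
    (h : Integrable (fun u : ι → ℝ => ∑ j, u j ^ 2) μ) (v : ι → ℝ) :
    ∑ j, (v j - ∫ u, u j ∂μ) ^ 2 ≤ ∫ u, ∑ j, (u j - v j) ^ 2 ∂μ := by
  have hj := memLp_two_eval_of_integrable_sum_sq_s9 h
  have hsq (j : ι) : Integrable (fun u : ι → ℝ => (u j - v j) ^ 2) μ :=
    ((hj j).sub (memLp_const (v j))).integrable_sq
  rw [integral_finsetSum _ fun j _ => hsq j]
  exact sum_le_sum fun j _ => sq_sub_integral_le_integral_sq_sub (hj j) (v j)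

lemma exists_le_sum_mul_of_sum_eq_one {ι : Type*} [Fintype ι] [Nonempty ι] {w : ι → ℝ}
    (f : ι → ℝ) (hw : ∀ i, 0 ≤ w i) (hw1 : ∑ i, w i = 1) : ∃ i, f i ≤ ∑ j, w j * f j := by
  obtain ⟨i, hi⟩ := Finite.exists_min f
  refine ⟨i, ?_⟩
  calc f i = ∑ j, w j * f i := by rw [← sum_mul, hw1, one_mul]
    _ ≤ ∑ j, w j * f j := sum_le_sum fun j _ => mul_le_mul_of_nonneg_left (hi j) (hw j)

lemma exists_integral_le_dmeMSE_const {n d : ℕ} {G : Type*} [AddCommGroup G] [Fintype G]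
    (hn : n ≠ 0) {enc : Fin n → (Fin d → ℝ) → G → ℝ} (dec : G → Measure (Fin d → ℝ))
    {v : Fin d → ℝ} (henc_nonneg : ∀ i g, 0 ≤ enc i v g)
    (henc_sum_one : ∀ i, ∑ g, enc i v g = 1) :
    ∃ s : G, ∫ u, ∑ j, (u j - v j) ^ 2 ∂(dec s) ≤ dmeMSE enc dec (fun _ => v) := by
  have hmse : dmeMSE enc dec (fun _ => v) = ∑ z : Fin n → G,
      (∏ i, enc i v (z i)) * ∫ u, ∑ j, (u j - v j) ^ 2 ∂(dec (∑ i, z i)) := by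
    simp only [dmeMSE, sum_const, card_univ, Fintype.card_fin, nsmul_eq_mul,
      inv_mul_cancel_left₀ (Nat.cast_ne_zero.mpr hn : (n : ℝ) ≠ 0)]
  have hw1 : ∑ z : Fin n → G, ∏ i, enc i v (z i) = 1 := by
    simp [← Fintype.prod_sum, henc_sum_one]
  obtain ⟨z, hz⟩ := exists_le_sum_mul_of_sum_eq_one
    (fun z : Fin n → G => ∫ u, ∑ j, (u j - v j) ^ 2 ∂(dec (∑ i, z i)))
    (fun z => prod_nonneg fun i _ => henc_nonneg i (z i)) hw1
  exact ⟨∑ i, z i, hmse ▸ hz⟩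

lemma pow_finrank_le_card_mul_pow_finrank_of_closedBall_subset {E ι : Type*}
    [NormedAddCommGroup E] [NormedSpace ℝ E] [FiniteDimensional ℝ E] [MeasurableSpace E]
    [BorelSpace E] (μ : Measure E) [μ.IsAddHaarMeasure] [Fintype ι] {x : E} {p : ι → E}
    {R r : ℝ} (hR : 0 ≤ R) (hr : 0 ≤ r) (hcover : closedBall x R ⊆ ⋃ i, closedBall (p i) r) :
    R ^ finrank ℝ E ≤ Fintype.card ι * r ^ finrank ℝ E := by
  have hunit_pos : μ (closedBall 0 1) ≠ 0 := (measure_closedBall_pos μ 0 one_pos).ne'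
  have hunit_fin : μ (closedBall 0 1) ≠ ⊤ := measure_closedBall_lt_top.ne
  have hvol : ENNReal.ofReal (R ^ finrank ℝ E) * μ (closedBall 0 1)
      ≤ Fintype.card ι * (ENNReal.ofReal (r ^ finrank ℝ E) * μ (closedBall 0 1)) :=
    calc _ = μ (closedBall x R) := (Measure.addHaar_closedBall' μ x hR).symm
      _ ≤ μ (⋃ i, closedBall (p i) r) := measure_mono hcover
      _ ≤ ∑ i, μ (closedBall (p i) r) := measure_iUnion_fintype_le μ _
      _ = _ := by simp [Measure.addHaar_closedBall' μ _ hr]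
  rwa [← mul_assoc, ENNReal.mul_le_mul_iff_left hunit_pos hunit_fin, ← ENNReal.ofReal_natCast,
    ← ENNReal.ofReal_mul (Nat.cast_nonneg _), ENNReal.ofReal_le_ofReal_iff (by positivity)]
    at hvol

lemma half_mul_logb_sq_div_le_logb {d : ℕ} {c ξ N : ℝ} (hc : 0 < c) (hξ : 0 < ξ)
    (h : c ^ d ≤ N * √ξ ^ d) : d / 2 * Real.logb 2 (c ^ 2 / ξ) ≤ Real.logb 2 N := by
  have hsξ : 0 < √ξ := Real.sqrt_pos.2 hξ
  have hratio : (c / √ξ) ^ d ≤ N := by rwa [div_pow, div_le_iff₀ (pow_pos hsξ d)]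
  have hsq : c ^ 2 / ξ = (c / √ξ) ^ 2 := by rw [div_pow, Real.sq_sqrt hξ.le]
  calc d / 2 * Real.logb 2 (c ^ 2 / ξ) = Real.logb 2 ((c / √ξ) ^ d) := by
        rw [hsq, Real.logb_pow, Real.logb_pow]; push_cast; ring
    _ ≤ Real.logb 2 N := Real.logb_le_logb_of_le one_lt_two (by positivity) hratio

theorem secagg_dme_group_size_lower_bound_general (n d : ℕ) (hn : 0 < n)
    (c ξ : ℝ) (hc : 0 < c) (hξ : 0 < ξ)
    (G : Type) [AddCommGroup G] [Fintype G]
    (enc : Fin n → (Fin d → ℝ) → G → ℝ)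
    (henc_nonneg : ∀ i v g, 0 ≤ enc i v g)
    (henc_sum_one : ∀ i (v : Fin d → ℝ),
      Real.sqrt (∑ j, (v j) ^ 2) ≤ c → ∑ g, enc i v g = 1)
    (dec : G → Measure (Fin d → ℝ))
    (hdec_prob : ∀ g, IsProbabilityMeasure (dec g))
    (hdec_sq : ∀ g, Integrable (fun u : Fin d → ℝ => ∑ j, (u j) ^ 2) (dec g))
    (hacc : ∀ x : Fin n → Fin d → ℝ,
      (∀ i, Real.sqrt (∑ j, (x i j) ^ 2) ≤ c) → dmeMSE enc dec x ≤ ξ) :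
    (d : ℝ) / 2 * Real.logb 2 (c ^ 2 / ξ) ≤ Real.logb 2 (Fintype.card G) := by
  have hclose : ∀ v : Fin d → ℝ, √(∑ j, v j ^ 2) ≤ c →
      ∃ s : G, ∑ j, (v j - ∫ u, u j ∂(dec s)) ^ 2 ≤ ξ := by
    intro v hv
    obtain ⟨s, hs⟩ := exists_integral_le_dmeMSE_const hn.ne' dec (fun i => henc_nonneg i v)
      (fun i => henc_sum_one i v hv)
    have := hdec_prob s
    exact ⟨s, (sum_sq_sub_integral_le_integral_sum_sq_sub (hdec_sq s) v).trans
      (hs.trans (hacc _ fun _ => hv))⟩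
  have hcover : closedBall (0 : EuclideanSpace ℝ (Fin d)) c ⊆
      ⋃ s : G, closedBall (WithLp.toLp 2 fun j => ∫ u, u j ∂(dec s)) √ξ := by
    intro w hw
    obtain ⟨s, hs⟩ := hclose w.ofLp (by simpa [EuclideanSpace.norm_eq] using hw)
    exact Set.mem_iUnion.2 ⟨s, by
      simpa [EuclideanSpace.dist_eq, Real.dist_eq] using Real.sqrt_le_sqrt hs⟩
  have hvol := pow_finrank_le_card_mul_pow_finrank_of_closedBall_subset volume hc.le
    (Real.sqrt_nonneg ξ) hcover
  rw [finrank_euclideanSpace_fin] at hvol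
  exact half_mul_logb_sq_div_le_logb hc hξ hvol

/-- in the secure-aggregation DME model with `n` clients, dimension `d`,
radius `c > 0` and finite abelian group `G`, if the scheme has MSE at most `ξ ≤ c²`
for all inputs in the ball `B_d(c)`, then `log₂|G| ≥ (d/2)·log₂(c²/ξ)`. -/
theorem secagg_dme_group_size_lower_bound (n d : ℕ) (hn : 0 < n) (hd : 0 < d)
    (c ξ : ℝ) (hc : 0 < c) (hξ : 0 < ξ) (hξc : ξ ≤ c ^ 2)
    (G : Type) [AddCommGroup G] [Fintype G]
    (enc : Fin n → (Fin d → ℝ) → G → ℝ)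
    (henc_nonneg : ∀ i v g, 0 ≤ enc i v g)
    (henc_sum_one : ∀ i (v : Fin d → ℝ),
      Real.sqrt (∑ j, (v j) ^ 2) ≤ c → ∑ g, enc i v g = 1)
    (dec : G → Measure (Fin d → ℝ))
    (hdec_prob : ∀ g, IsProbabilityMeasure (dec g))
    (hdec_sq : ∀ g, Integrable (fun u : Fin d → ℝ => ∑ j, (u j) ^ 2) (dec g))
    (hacc : ∀ x : Fin n → Fin d → ℝ,
      (∀ i, Real.sqrt (∑ j, (x i j) ^ 2) ≤ c) → dmeMSE enc dec x ≤ ξ) :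
    (d : ℝ) / 2 * Real.logb 2 (c ^ 2 / ξ) ≤ Real.logb 2 (Fintype.card G) :=
  secagg_dme_group_size_lower_bound_general n d hn c ξ hc hξ G enc henc_nonneg henc_sum_one dec
    hdec_prob hdec_sq hacc
end
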